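/- Let m₁, m₂, ν₁, ν₂ > 0 satisfy m₁ + ν₁ ≥ m₂ + ν₂ and m₁/ν₁ ≥ m₂/ν₂. Then for all u > 0 and 0 < w < 1, h(u,w) ≥ K₀ · u^{(m₁+m₂)/2−1} · w^{m₁/2−1} · (1−w)^{m₂/2−1} · (1 + m₁u/(2ν₁))^{−(m₁+ν₁)}, where h(u,w) = K₀ · u^{(m₁+m₂)/2−1} · w^{m₁/2−1} · (1−w)^{m₂/2−1} · (1 + m₁uw/ν₁)^{−(m₁+ν₁)/2} · (1 + m₂u(1−w)/ν₂)^{−(m₂+ν₂)/2}. -/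

import Mathlib

/-!
Put `a = m₁u/ν₁`, `X = 1 + a w`, `Y = 1 + a(1-w)` and `Z = 1 + m₂u(1-w)/ν₂`.
The ratio condition gives `Z ≤ Y`, and `Y ≥ 1` together with the sum condition
`(m₂+ν₂)/2 ≤ (m₁+ν₁)/2 =: p` gives `Z^{(m₂+ν₂)/2} ≤ Y^p`. By AM-GM,
`X Y ≤ (1 + a/2)²`, so the product of the two denominators of `h` is at most
`(1 + a/2)^{2p}`.
-/

open Real MeasureTheory Set

/-- Beta function `B(a,b) = Γ(a)Γ(b)/Γ(a+b)`. -/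
noncomputable def Beta (a b : ℝ) : ℝ := Gamma a * Gamma b / Gamma (a + b)

/-- The normalizing constant `K₀`. -/
noncomputable def K₀ (m₁ m₂ ν₁ ν₂ : ℝ) : ℝ :=
  (m₁ / ν₁) ^ (m₁ / 2) * (m₂ / ν₂) ^ (m₂ / 2) /
    (Beta (m₁ / 2) (ν₁ / 2) * Beta (m₂ / 2) (ν₂ / 2))

lemma Beta_pos {a b : ℝ} (ha : 0 < a) (hb : 0 < b) : 0 < Beta a b :=
  div_pos (mul_pos (Gamma_pos_of_pos ha) (Gamma_pos_of_pos hb)) (Gamma_pos_of_pos (add_pos ha hb))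

lemma K₀_pos {m₁ m₂ ν₁ ν₂ : ℝ} (hm₁ : 0 < m₁) (hm₂ : 0 < m₂) (hν₁ : 0 < ν₁) (hν₂ : 0 < ν₂) :
    0 < K₀ m₁ m₂ ν₁ ν₂ := by
  have := Beta_pos (half_pos hm₁) (half_pos hν₁)
  have := Beta_pos (half_pos hm₂) (half_pos hν₂)
  have := rpow_pos_of_pos (div_pos hm₁ hν₁) (m₁ / 2)
  have := rpow_pos_of_pos (div_pos hm₂ hν₂) (m₂ / 2)
  unfold K₀
  positivity

lemma one_add_mul_mul_one_add_mul_one_sub_le (a w : ℝ) :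
    (1 + a * w) * (1 + a * (1 - w)) ≤ (1 + a / 2) ^ 2 := by
  nlinarith [sq_nonneg (a * (w - 1 / 2))]

lemma rpow_mul_rpow_le_rpow_two_mul {c x y z p q : ℝ} (hxy : x * y ≤ c ^ 2) (hc : 0 < c)
    (hx : 0 < x) (hz : 0 < z) (hzy : z ≤ y) (hy : 1 ≤ y) (hq : 0 ≤ q) (hqp : q ≤ p) :
    x ^ p * z ^ q ≤ c ^ (2 * p) := by
  have hp : 0 ≤ p := hq.trans hqp
  calc x ^ p * z ^ q ≤ x ^ p * y ^ p := by
        gcongr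
        exact (rpow_le_rpow hz.le hzy hq).trans (rpow_le_rpow_of_exponent_le hy hqp)
    _ = (x * y) ^ p := (mul_rpow hx.le (by linarith)).symm
    _ ≤ (c ^ 2) ^ p := rpow_le_rpow (by positivity) hxy hp
    _ = c ^ (2 * p) := by rw [← rpow_natCast, ← rpow_mul hc.le, Nat.cast_ofNat]

lemma rpow_neg_two_mul_le_rpow_neg_mul_rpow_neg {c x y z p q : ℝ} (hxy : x * y ≤ c ^ 2) (hc : 0 < c)
    (hx : 0 < x) (hz : 0 < z) (hzy : z ≤ y) (hy : 1 ≤ y) (hq : 0 ≤ q) (hqp : q ≤ p) :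
    c ^ (-(2 * p)) ≤ x ^ (-p) * z ^ (-q) := by
  rw [rpow_neg hc.le, rpow_neg hx.le, rpow_neg hz.le, ← mul_inv]
  exact inv_anti₀ (by positivity) (rpow_mul_rpow_le_rpow_two_mul hxy hc hx hz hzy hy hq hqp)

lemma one_add_rpow_neg_le_mul {m₁ m₂ ν₁ ν₂ u w : ℝ}
    (hm₁ : 0 < m₁) (hm₂ : 0 < m₂) (hν₁ : 0 < ν₁) (hν₂ : 0 < ν₂)
    (hsum : m₂ + ν₂ ≤ m₁ + ν₁) (hratio : m₂ / ν₂ ≤ m₁ / ν₁)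
    (hu : 0 < u) (hw0 : 0 < w) (hw1 : w < 1) :
    (1 + m₁ * u / (2 * ν₁)) ^ (-(m₁ + ν₁)) ≤
      (1 + m₁ * u * w / ν₁) ^ (-(m₁ + ν₁) / 2) *
        (1 + m₂ * u * (1 - w) / ν₂) ^ (-(m₂ + ν₂) / 2) := by
  have hw : 0 < 1 - w := sub_pos.mpr hw1
  have hzy : m₂ * u * (1 - w) / ν₂ ≤ m₁ * u * (1 - w) / ν₁ := by
    calc m₂ * u * (1 - w) / ν₂ = m₂ / ν₂ * (u * (1 - w)) := by ring
      _ ≤ m₁ / ν₁ * (u * (1 - w)) := by gcongr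
      _ = m₁ * u * (1 - w) / ν₁ := by ring
  have hxy : (1 + m₁ * u * w / ν₁) * (1 + m₁ * u * (1 - w) / ν₁) ≤ (1 + m₁ * u / (2 * ν₁)) ^ 2 := by
    convert one_add_mul_mul_one_add_mul_one_sub_le (m₁ * u / ν₁) w using 2 <;> ring
  have key := rpow_neg_two_mul_le_rpow_neg_mul_rpow_neg hxy
    (z := 1 + m₂ * u * (1 - w) / ν₂) (p := (m₁ + ν₁) / 2) (q := (m₂ + ν₂) / 2)
    (by positivity) (by positivity) (by positivity) (by linarith)
    (le_add_of_nonneg_right (by positivity)) (by positivity) (by linarith)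
  convert key using 2 <;> ring

/-- Lower bound on the joint density `h(u,w)`: if `m₁ + ν₁ ≥ m₂ + ν₂` and
`m₁/ν₁ ≥ m₂/ν₂`, then for `u > 0` and `0 < w < 1`,
`h(u,w) ≥ K₀ u^{(m₁+m₂)/2−1} w^{m₁/2−1} (1−w)^{m₂/2−1} (1 + m₁u/(2ν₁))^{−(m₁+ν₁)}`. -/
theorem hDens_lower_bound (m₁ m₂ ν₁ ν₂ : ℝ)
    (hm₁ : 0 < m₁) (hm₂ : 0 < m₂) (hν₁ : 0 < ν₁) (hν₂ : 0 < ν₂)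
    (hsum : m₂ + ν₂ ≤ m₁ + ν₁) (hratio : m₂ / ν₂ ≤ m₁ / ν₁)
    (u w : ℝ) (hu : 0 < u) (hw0 : 0 < w) (hw1 : w < 1) :
    K₀ m₁ m₂ ν₁ ν₂ * u ^ ((m₁ + m₂) / 2 - 1) * w ^ (m₁ / 2 - 1) * (1 - w) ^ (m₂ / 2 - 1) *
        (1 + m₁ * u / (2 * ν₁)) ^ (-(m₁ + ν₁)) ≤
      K₀ m₁ m₂ ν₁ ν₂ * u ^ ((m₁ + m₂) / 2 - 1) * w ^ (m₁ / 2 - 1) * (1 - w) ^ (m₂ / 2 - 1) *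
        (1 + m₁ * u * w / ν₁) ^ (-(m₁ + ν₁) / 2) *
        (1 + m₂ * u * (1 - w) / ν₂) ^ (-(m₂ + ν₂) / 2) := by
  have := K₀_pos hm₁ hm₂ hν₁ hν₂
  rw [mul_assoc _ ((1 + m₁ * u * w / ν₁) ^ _)]
  gcongr
  exact one_add_rpow_neg_le_mul hm₁ hm₂ hν₁ hν₂ hsum hratio hu hw0 hw1
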